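/- arXiv:2309.00976 — 4 statements merged into one kernel-verified Lean document; each statement's English description precedes it below -/
import Mathlib

section
/- Let G = (V,E) be a finite simple undirected graph and let u, v ∈ V be distinct non-adjacent vertices. On a probability space, let X : V → ℝ^F be a random matrix whose entries X_{k,i} are jointly independent with mean 0, variance σ_node², and let W be a random F′ × F matrix, independent of X, whose entries are jointly independent with mean 0, variance σ_weight². Define the 1-layer GCN output h_w = W · Σ_{k ∈ N(w) ∪ {w}} (1/√(d̂_k d̂_w)) X_k for each vertex w, where d̂_w = d_w + 1. Then the expected inner product satisfies E[h_u · h_v] = (C / √(d̂_u d̂_v)) · Σ_{k ∈ N(u) ∩ N(v)} 1/d̂_k, where C = σ_node² σ_weight² F F′. -/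
/-!
Expanding both outputs, `h_u · h_v = Xᵀ K(W) X` is a quadratic form in the entries of `X` with
matrix `K(W) = (c_u c_vᵀ) ⊗ (Wᵀ W)`, where `c_w` is row `w` of the renormalised adjacency matrix.
As `X` and `W` are independent we may integrate over `X` first. For independent centred entries of
variance `σ²`, `E[ξᵀ M ξ] = σ² tr M`; so the inner integral is `σ_node² (c_u · c_v) ‖W‖²`, and
`E ‖W‖² = σ_weight² F F'`. Finally `c_u · c_v = Σ_{k ∈ N(u) ∩ N(v)} 1 / (d̂_k √(d̂_u d̂_v))`
because `u ≠ v` are not adjacent.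

The moments are Bochner integrals, so `∫ ξ² = 0` only says that `ξ = 0` a.e. or that `ξ²` is not
integrable, and `E[ξᵀ M ξ] = 0` then needs an argument. Conditioning on the other entries, the form
is a polynomial `a ξ² + b ξ + c` in one entry `ξ`; when it is integrable its integral is still
`a ∫ ξ² + b ∫ ξ + c = c`, since a non-integrable `ξ²` (resp. `ξ`) forces `a = 0` (resp. `b = 0`).
This allows an induction on the entries.
-/

open MeasureTheory ProbabilityTheory

section

open Matrix
open scoped Kronecker

variable {Ω : Type*} {mΩ : MeasurableSpace Ω} {μ : Measure Ω}

theorem ProbabilityTheory.IndepFun.integral_comp_eq_integral_slice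
    {α β : Type*} [MeasurableSpace α] [MeasurableSpace β] [IsFiniteMeasure μ]
    {ξ : Ω → α} {η : Ω → β} (hξη : IndepFun ξ η μ) (hξ : Measurable ξ) (hη : Measurable η)
    {Φ : α × β → ℝ} (hΦ : Measurable Φ) (hint : Integrable (fun ω => Φ (ξ ω, η ω)) μ)
    {g : β → ℝ} (hg : ∀ y, Integrable (fun ω => Φ (ξ ω, y)) μ → ∫ ω, Φ (ξ ω, y) ∂μ = g y) :
    ∫ ω, Φ (ξ ω, η ω) ∂μ = ∫ ω, g (η ω) ∂μ := by
  have hmap := hξη.map_prod_eq_prod_map_map hξ.aemeasurable hη.aemeasurable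
  have hΦint : Integrable Φ ((μ.map ξ).prod (μ.map η)) := by
    rw [← hmap, integrable_map_measure hΦ.aestronglyMeasurable (hξ.prodMk hη).aemeasurable]
    exact hint
  have hslice : (fun y => ∫ x, Φ (x, y) ∂μ.map ξ) =ᵐ[μ.map η] g := by
    filter_upwards [hΦint.prod_left_ae] with y hy
    have hmeas : Measurable fun x => Φ (x, y) := hΦ.comp (measurable_id.prodMk measurable_const)
    rw [integral_map hξ.aemeasurable hmeas.aestronglyMeasurable]
    exact hg y ((integrable_map_measure hmeas.aestronglyMeasurable hξ.aemeasurable).mp hy)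
  have hgmeas : AEStronglyMeasurable g (μ.map η) :=
    hΦint.integral_prod_right.aestronglyMeasurable.congr hslice
  calc ∫ ω, Φ (ξ ω, η ω) ∂μ = ∫ z, Φ z ∂(μ.map ξ).prod (μ.map η) := by
        rw [← hmap, integral_map (hξ.prodMk hη).aemeasurable hΦ.aestronglyMeasurable]
    _ = ∫ y, g y ∂μ.map η := by rw [integral_prod_symm Φ hΦint, integral_congr_ae hslice]
    _ = ∫ ω, g (η ω) ∂μ := integral_map hη.aemeasurable hgmeas

theorem leading_coeff_eq_zero_of_integrable_quadratic [IsFiniteMeasure μ] {f : Ω → ℝ}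
    (hf : AEStronglyMeasurable f μ) (hsq : ¬ Integrable (fun ω => f ω ^ 2) μ) {a b c : ℝ}
    (h : Integrable (fun ω => a * f ω ^ 2 + b * f ω + c) μ) : a = 0 := by
  by_contra ha
  refine hsq (Integrable.mono'
    (g := fun ω => 2 * (a * f ω ^ 2 + b * f ω + c - c) / a + (b / a) ^ 2)
    ((h.sub (integrable_const c)).const_mul 2 |>.div_const a |>.add (integrable_const _))
    (hf.pow 2) (ae_of_all _ fun ω => ?_))
  have key : 2 * (a * f ω ^ 2 + b * f ω + c - c) / a + (b / a) ^ 2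
      = f ω ^ 2 + (f ω + b / a) ^ 2 := by
    field_simp; ring
  rw [Real.norm_eq_abs, abs_of_nonneg (sq_nonneg _), key]
  nlinarith [sq_nonneg (f ω + b / a)]

theorem integral_quadratic_of_integrable [IsProbabilityMeasure μ] {f : Ω → ℝ}
    (hf : AEStronglyMeasurable f μ) {a b c : ℝ}
    (h : Integrable (fun ω => a * f ω ^ 2 + b * f ω + c) μ) :
    ∫ ω, a * f ω ^ 2 + b * f ω + c ∂μ = a * ∫ ω, f ω ^ 2 ∂μ + b * ∫ ω, f ω ∂μ + c := by
  by_cases hsq : Integrable (fun ω => f ω ^ 2) μ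
  · have hf1 : Integrable f μ := ((memLp_two_iff_integrable_sq hf).mpr hsq).integrable one_le_two
    have hab : Integrable (fun ω => a * f ω ^ 2 + b * f ω) μ :=
      (hsq.const_mul a).add (hf1.const_mul b)
    rw [integral_add hab (integrable_const c), integral_add (hsq.const_mul a) (hf1.const_mul b),
      integral_const_mul, integral_const_mul, integral_const, probReal_univ, one_smul]
  obtain rfl := leading_coeff_eq_zero_of_integrable_quadratic hf hsq h
  simp only [zero_mul, zero_add] at h ⊢
  by_cases hf1 : Integrable f μ
  · rw [integral_add (hf1.const_mul b) (integrable_const c), integral_const_mul, integral_const,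
      probReal_univ, one_smul]
  obtain rfl : b = 0 := by
    by_contra hb
    refine hf1 (((h.sub (integrable_const c)).div_const b).congr (ae_of_all _ fun ω => ?_))
    simp only [Pi.sub_apply]
    field_simp
    ring
  simp

theorem ProbabilityTheory.IndepFun.integral_quadratic_eq_integral [IsProbabilityMeasure μ]
    {β : Type*} [MeasurableSpace β] {ξ : Ω → ℝ} {η : Ω → β} (hξη : IndepFun ξ η μ)
    (hξ : Measurable ξ) (hη : Measurable η) (hmean : ∫ ω, ξ ω ∂μ = 0)
    (hsq : ∫ ω, ξ ω ^ 2 ∂μ = 0) (a : ℝ) {b c : β → ℝ} (hb : Measurable b) (hc : Measurable c)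
    (h : Integrable (fun ω => a * ξ ω ^ 2 + b (η ω) * ξ ω + c (η ω)) μ) :
    ∫ ω, a * ξ ω ^ 2 + b (η ω) * ξ ω + c (η ω) ∂μ = ∫ ω, c (η ω) ∂μ :=
  hξη.integral_comp_eq_integral_slice hξ hη (Φ := fun z => a * z.1 ^ 2 + b z.2 * z.1 + c z.2)
    (by fun_prop) h fun y hy => by
      refine (integral_quadratic_of_integrable (a := a) (b := b y) (c := c y)
        hξ.aestronglyMeasurable hy).trans ?_
      rw [hsq, hmean]
      ring

theorem Finset.sum_sum_insert_mul {ι R : Type*} [DecidableEq ι] [CommSemiring R] {a : ι}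
    {s : Finset ι} (ha : a ∉ s) (M : ι → ι → R) (x : ι → R) :
    ∑ i ∈ insert a s, ∑ j ∈ insert a s, M i j * (x i * x j)
      = M a a * x a ^ 2 + (∑ i ∈ s, (M a i + M i a) * x i) * x a
        + ∑ i ∈ s, ∑ j ∈ s, M i j * (x i * x j) := by
  simp only [Finset.sum_insert ha, Finset.sum_add_distrib, Finset.sum_mul, add_mul]
  rw [Finset.sum_congr rfl fun j _ => (by ring : M a j * (x a * x j) = M a j * x j * x a),
    Finset.sum_congr rfl fun i _ => (by ring : M i a * (x i * x a) = M i a * x i * x a)]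
  ring

theorem ProbabilityTheory.iIndepFun.integral_quadratic_form_eq_zero [IsProbabilityMeasure μ]
    {ι : Type*} {ξ : ι → Ω → ℝ} (hξ : ∀ i, Measurable (ξ i))
    (hind : iIndepFun ξ μ) (hmean : ∀ i, ∫ ω, ξ i ω ∂μ = 0)
    (hsq : ∀ i, ∫ ω, ξ i ω ^ 2 ∂μ = 0) (M : ι → ι → ℝ) (s : Finset ι) :
    ∫ ω, ∑ i ∈ s, ∑ j ∈ s, M i j * (ξ i ω * ξ j ω) ∂μ = 0 := by
  classical
  induction s using Finset.induction_on with
  | empty => simp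
  | @insert a s ha ih =>
    by_cases hint : Integrable (fun ω => ∑ i ∈ insert a s, ∑ j ∈ insert a s,
        M i j * (ξ i ω * ξ j ω)) μ
    swap
    · exact integral_undef hint
    let R : Ω → s → ℝ := fun ω i => ξ i ω
    let b : (s → ℝ) → ℝ := fun v => ∑ i : s, (M a i + M i a) * v i
    let c : (s → ℝ) → ℝ := fun v => ∑ i : s, ∑ j : s, M i j * (v i * v j)
    have hb : ∀ ω, b (R ω) = ∑ i ∈ s, (M a i + M i a) * ξ i ω := fun ω =>
      Finset.sum_coe_sort s (fun i => (M a i + M i a) * ξ i ω)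
    have hc : ∀ ω, c (R ω) = ∑ i ∈ s, ∑ j ∈ s, M i j * (ξ i ω * ξ j ω) := fun ω => by
      simp only [c, R]
      rw [Finset.sum_coe_sort s (fun i => ∑ j : s, M i j * (ξ i ω * ξ j ω))]
      exact Finset.sum_congr rfl fun i _ => Finset.sum_coe_sort s (fun j => M i j * (ξ i ω * ξ j ω))
    have hsplit : ∀ ω, ∑ i ∈ insert a s, ∑ j ∈ insert a s, M i j * (ξ i ω * ξ j ω)
        = M a a * ξ a ω ^ 2 + b (R ω) * ξ a ω + c (R ω) := fun ω => by
      rw [Finset.sum_sum_insert_mul ha, hb, hc]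
    have hR : Measurable R := measurable_pi_lambda _ fun i => hξ i
    have hindR : IndepFun (ξ a) R μ :=
      (hind.indepFun_finset {a} s (Finset.disjoint_singleton_left.mpr ha) hξ).comp
        (measurable_pi_apply (⟨a, Finset.mem_singleton_self a⟩ : ({a} : Finset ι))) measurable_id
    simp only [hsplit] at hint ⊢
    rw [hindR.integral_quadratic_eq_integral (hξ a) hR (hmean a) (hsq a) _ (by fun_prop)
      (by fun_prop) hint]
    simpa only [hc] using ih

theorem memLp_two_of_integral_sq_ne_zero {f : Ω → ℝ} (hf : AEStronglyMeasurable f μ)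
    (h : ∫ ω, f ω ^ 2 ∂μ ≠ 0) : MemLp f 2 μ :=
  (memLp_two_iff_integrable_sq hf).mpr <| by
    by_contra hint
    exact h (integral_undef hint)

theorem ProbabilityTheory.IndepFun.memLp_two_mul {f g : Ω → ℝ} (hfg : IndepFun f g μ)
    (hf : MemLp f 2 μ) (hg : MemLp g 2 μ) : MemLp (fun ω => f ω * g ω) 2 μ := by
  refine (memLp_two_iff_integrable_sq (hf.1.mul hg.1)).mpr ?_
  refine ((hfg.comp (measurable_id.pow_const 2) (measurable_id.pow_const 2)).integrable_mul
    hf.integrable_sq hg.integrable_sq).congr (ae_of_all _ fun ω => ?_)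
  simp [mul_pow]

theorem ProbabilityTheory.iIndepFun.integral_quadratic_form_eq_mul_trace
    [IsProbabilityMeasure μ] {ι : Type*} [Fintype ι] {ξ : ι → Ω → ℝ}
    (hξ : ∀ i, Measurable (ξ i)) (hind : iIndepFun ξ μ) (hmean : ∀ i, ∫ ω, ξ i ω ∂μ = 0)
    {v : ℝ} (hvar : ∀ i, ∫ ω, ξ i ω ^ 2 ∂μ = v) (M : Matrix ι ι ℝ) :
    ∫ ω, ∑ i, ∑ j, M i j * (ξ i ω * ξ j ω) ∂μ = v * M.trace := by
  classical
  obtain rfl | hv := eq_or_ne v 0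
  · rw [zero_mul]
    exact hind.integral_quadratic_form_eq_zero hξ hmean hvar M Finset.univ
  have hL2 : ∀ i, MemLp (ξ i) 2 μ := fun i =>
    memLp_two_of_integral_sq_ne_zero (hξ i).aestronglyMeasurable (by rw [hvar]; exact hv)
  have hint : ∀ i j, Integrable (fun ω => M i j * (ξ i ω * ξ j ω)) μ := fun i j =>
    ((hL2 i).integrable_mul (hL2 j)).const_mul _
  have hcov : ∀ i j, ∫ ω, ξ i ω * ξ j ω ∂μ = if i = j then v else 0 := by
    intro i j
    split_ifs with hij
    · subst hij
      simp_rw [← sq]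
      exact hvar i
    · rw [(hind.indepFun hij).integral_fun_mul_eq_mul_integral (hξ i).aestronglyMeasurable
        (hξ j).aestronglyMeasurable, hmean, zero_mul]
  rw [integral_finsetSum _ fun i _ => integrable_finsetSum _ fun j _ => hint i j]
  simp_rw [integral_finsetSum _ fun j _ => hint _ j, integral_const_mul, hcov]
  simp [Matrix.trace, Finset.mul_sum, mul_comm]

theorem ProbabilityTheory.iIndepFun.integral_sum_sq
    [IsProbabilityMeasure μ] {ι : Type*} [Fintype ι] {ξ : ι → Ω → ℝ}
    (hξ : ∀ i, Measurable (ξ i)) (hind : iIndepFun ξ μ) (hmean : ∀ i, ∫ ω, ξ i ω ∂μ = 0)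
    {v : ℝ} (hvar : ∀ i, ∫ ω, ξ i ω ^ 2 ∂μ = v) :
    ∫ ω, ∑ i, ξ i ω ^ 2 ∂μ = v * Fintype.card ι := by
  classical
  simpa [Matrix.one_apply, ← sq] using hind.integral_quadratic_form_eq_mul_trace hξ hmean hvar 1

theorem sum_mul_sum_eq_sum_sum_kronecker {J I K R : Type*} [Fintype J] [Fintype I] [Fintype K]
    [CommSemiring R] (W : Matrix J I R) (α β : K → R) (x : K × I → R) :
    ∑ j, (∑ i, W j i * ∑ k, α k * x (k, i)) * (∑ i, W j i * ∑ k, β k * x (k, i))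
      = ∑ p, ∑ q, (vecMulVec α β ⊗ₖ (Wᵀ * W)) p q * (x p * x q) := by
  rw [Finset.sum_comm]
  simp only [Fintype.sum_prod_type_right, kronecker_apply, vecMulVec_apply, mul_apply,
    transpose_apply, Finset.mul_sum, Finset.sum_mul]
  simp only [Finset.sum_comm (γ := J)]
  congr! 5 with i₂ k₂ i₁ k₁ j
  ring

theorem Matrix.trace_transpose_mul_self {m n R : Type*} [Fintype m] [Fintype n] [CommSemiring R]
    (A : Matrix m n R) : (Aᵀ * A).trace = ∑ p : m × n, A p.1 p.2 ^ 2 := by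
  simp only [trace, diag, mul_apply, transpose_apply, sq, Fintype.sum_prod_type]
  exact Finset.sum_comm

section LinearLayer

variable {κ I J : Type*} [Fintype κ] [Fintype I]
  {X : κ → I → Ω → ℝ} {W : J → I → Ω → ℝ}

theorem memLp_two_sum_mul_sum
    (hXW : IndepFun (fun ω (p : κ × I) => X p.1 p.2 ω) (fun ω (q : J × I) => W q.1 q.2 ω) μ)
    (hX : ∀ k i, MemLp (X k i) 2 μ) (hW : ∀ j i, MemLp (W j i) 2 μ) (α : κ → ℝ) (j : J) :
    MemLp (fun ω => ∑ i, W j i ω * ∑ k, α k * X k i ω) 2 μ := by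
  refine memLp_finsetSum _ fun i _ => IndepFun.memLp_two_mul ?_ (hW j i)
    (memLp_finsetSum _ fun k _ => (hX k i).const_mul _)
  have : IndepFun (fun ω => ∑ k, α k * X k i ω) (W j i) μ :=
    hXW.comp (φ := fun x : κ × I → ℝ => ∑ k, α k * x (k, i)) (ψ := fun y : J × I → ℝ => y (j, i))
      (by fun_prop) (by fun_prop)
  exact this.symm

theorem integral_sum_mul_sum_eq_mul_dotProduct [Fintype J] [IsProbabilityMeasure μ]
    (hXmeas : ∀ k i, Measurable (X k i)) (hWmeas : ∀ j i, Measurable (W j i))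
    (hXindep : iIndepFun (fun (p : κ × I) ω => X p.1 p.2 ω) μ)
    (hWindep : iIndepFun (fun (q : J × I) ω => W q.1 q.2 ω) μ)
    (hXW : IndepFun (fun ω (p : κ × I) => X p.1 p.2 ω) (fun ω (q : J × I) => W q.1 q.2 ω) μ)
    (hXmean : ∀ k i, ∫ ω, X k i ω ∂μ = 0) {vX : ℝ} (hXvar : ∀ k i, ∫ ω, X k i ω ^ 2 ∂μ = vX)
    (hWmean : ∀ j i, ∫ ω, W j i ω ∂μ = 0) {vW : ℝ} (hWvar : ∀ j i, ∫ ω, W j i ω ^ 2 ∂μ = vW)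
    (α β : κ → ℝ) :
    ∫ ω, ∑ j, (∑ i, W j i ω * ∑ k, α k * X k i ω) * (∑ i, W j i ω * ∑ k, β k * X k i ω) ∂μ
      = vX * vW * Fintype.card J * Fintype.card I * (α ⬝ᵥ β) := by
  let Xv : Ω → κ × I → ℝ := fun ω p => X p.1 p.2 ω
  let Wv : Ω → J × I → ℝ := fun ω q => W q.1 q.2 ω
  let K : (J × I → ℝ) → Matrix (κ × I) (κ × I) ℝ := fun w =>
    vecMulVec α β ⊗ₖ ((of (Function.curry w))ᵀ * of (Function.curry w))
  let Φ : (κ × I → ℝ) × (J × I → ℝ) → ℝ := fun z => ∑ p, ∑ q, K z.2 p q * (z.1 p * z.1 q)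
  have hY : ∀ ω, ∑ j, (∑ i, W j i ω * ∑ k, α k * X k i ω) * (∑ i, W j i ω * ∑ k, β k * X k i ω)
      = Φ (Xv ω, Wv ω) := fun ω =>
    sum_mul_sum_eq_sum_sum_kronecker (of fun j i => W j i ω) α β (Xv ω)
  have hXv : Measurable Xv := measurable_pi_lambda _ fun p => hXmeas p.1 p.2
  have hWv : Measurable Wv := measurable_pi_lambda _ fun q => hWmeas q.1 q.2
  have hΦ : Measurable Φ := by
    refine Finset.measurable_sum _ fun p _ => Finset.measurable_sum _ fun q _ => ?_
    simp only [K, kroneckerMap_apply, vecMulVec_apply, mul_apply, transpose_apply, of_apply,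
      Function.curry]
    fun_prop
  simp_rw [hY]
  by_cases hint : Integrable (fun ω => Φ (Xv ω, Wv ω)) μ
  · calc ∫ ω, Φ (Xv ω, Wv ω) ∂μ
        = ∫ ω, vX * (K (Wv ω)).trace ∂μ :=
          hXW.integral_comp_eq_integral_slice hXv hWv hΦ hint fun w _ =>
            hXindep.integral_quadratic_form_eq_mul_trace (fun p => hXmeas p.1 p.2)
              (fun p => hXmean p.1 p.2) (fun p => hXvar p.1 p.2) (K w)
      _ = vX * (α ⬝ᵥ β) * ∫ ω, ∑ q, Wv ω q ^ 2 ∂μ := by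
          rw [← integral_const_mul]
          simp only [K, trace_kronecker, trace_vecMulVec, trace_transpose_mul_self, mul_assoc]
          rfl
      _ = vX * (α ⬝ᵥ β) * (vW * Fintype.card (J × I)) := by
          congr 1
          exact hWindep.integral_sum_sq (fun q : J × I => hWmeas q.1 q.2)
            (fun q => hWmean q.1 q.2) (fun q => hWvar q.1 q.2)
      _ = _ := by
          rw [Fintype.card_prod]
          push_cast
          ring
  · rw [integral_undef hint]
    obtain h0 | h0 : vX = 0 ∨ vW = 0 := by
      by_contra! hv
      have hX2 : ∀ k i, MemLp (X k i) 2 μ := fun k i =>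
        memLp_two_of_integral_sq_ne_zero (hXmeas k i).aestronglyMeasurable (hXvar k i ▸ hv.1)
      have hW2 : ∀ j i, MemLp (W j i) 2 μ := fun j i =>
        memLp_two_of_integral_sq_ne_zero (hWmeas j i).aestronglyMeasurable (hWvar j i ▸ hv.2)
      have hout := memLp_two_sum_mul_sum hXW hX2 hW2
      exact hint ((integrable_finsetSum _ fun j _ =>
        (hout α j).integrable_mul (hout β j)).congr (ae_of_all _ hY))
    all_goals simp [h0]

end LinearLayer

theorem SimpleGraph.insert_neighborFinset_inter {V : Type*} [Fintype V] [DecidableEq V]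
    (G : SimpleGraph V) [DecidableRel G.Adj] {u v : V} (huv : u ≠ v) (hadj : ¬ G.Adj u v) :
    insert u (G.neighborFinset u) ∩ insert v (G.neighborFinset v)
      = G.neighborFinset u ∩ G.neighborFinset v := by
  ext k
  simp only [Finset.mem_inter, Finset.mem_insert, SimpleGraph.mem_neighborFinset]
  constructor
  · rintro ⟨rfl | hu, rfl | hv⟩
    · exact absurd rfl huv
    · exact absurd hv.symm hadj
    · exact absurd hu hadj
    · exact ⟨hu, hv⟩
  · rintro ⟨hu, hv⟩
    exact ⟨Or.inr hu, Or.inr hv⟩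

theorem one_div_sqrt_mul_one_div_sqrt {a b c : ℝ} (ha : 0 < a) (hb : 0 ≤ b) :
    1 / √(a * b) * (1 / √(a * c)) = 1 / √(b * c) * (1 / a) := by
  rw [div_mul_div_comm, div_mul_div_comm, ← Real.sqrt_mul (mul_nonneg ha.le hb),
    show a * b * (a * c) = a ^ 2 * (b * c) by ring, Real.sqrt_mul (sq_nonneg a),
    Real.sqrt_sq ha.le]
  ring

-- the entry `Â_{wk}` of the renormalised adjacency matrix `D̂^{-1/2} (A + I) D̂^{-1/2}`
noncomputable def normAdj {V : Type*} [Fintype V] [DecidableEq V] (G : SimpleGraph V)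
    [DecidableRel G.Adj] (dhat : V → ℝ) (w k : V) : ℝ :=
  if k ∈ insert w (G.neighborFinset w) then 1 / √(dhat k * dhat w) else 0

section normAdj

variable {V : Type*} [Fintype V] [DecidableEq V] (G : SimpleGraph V) [DecidableRel G.Adj]
  (dhat : V → ℝ)

theorem sum_insert_neighborFinset_eq_sum_normAdj (w : V) (x : V → ℝ) :
    ∑ k ∈ insert w (G.neighborFinset w), 1 / √(dhat k * dhat w) * x k
      = ∑ k, normAdj G dhat w k * x k := by
  simp only [normAdj, ite_mul, zero_mul, Finset.sum_ite_mem, Finset.univ_inter]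

theorem normAdj_dotProduct_normAdj {u v : V} (huv : u ≠ v) (hadj : ¬ G.Adj u v)
    (hdhat : ∀ w, 0 < dhat w) :
    normAdj G dhat u ⬝ᵥ normAdj G dhat v
      = 1 / √(dhat u * dhat v) * ∑ k ∈ G.neighborFinset u ∩ G.neighborFinset v, 1 / dhat k := by
  calc normAdj G dhat u ⬝ᵥ normAdj G dhat v
      = ∑ k ∈ insert u (G.neighborFinset u) ∩ insert v (G.neighborFinset v),
          normAdj G dhat u k * normAdj G dhat v k := by
        refine (Finset.sum_subset (Finset.subset_univ _) fun k _ hk => ?_).symm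
        rcases not_and_or.mp (Finset.mem_inter.not.mp hk) with hk | hk <;>
          simp only [normAdj, if_neg hk, zero_mul, mul_zero]
    _ = ∑ k ∈ G.neighborFinset u ∩ G.neighborFinset v,
          1 / √(dhat k * dhat u) * (1 / √(dhat k * dhat v)) := by
        rw [← G.insert_neighborFinset_inter huv hadj]
        refine Finset.sum_congr rfl fun k hk => ?_
        rw [Finset.mem_inter] at hk
        simp only [normAdj, if_pos hk.1, if_pos hk.2]
    _ = _ := by
        rw [Finset.mul_sum]
        exact Finset.sum_congr rfl fun k _ =>
          one_div_sqrt_mul_one_div_sqrt (hdhat k) (hdhat u).le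

end normAdj

end

/-- GCN expectation.  For a 1-layer GCN with random input vectors and
random weight matrix, for distinct non-adjacent vertices `u, v`,
`E[h_u ⬝ h_v] = (C / √(d̂_u d̂_v)) · ∑_{k ∈ N(u) ∩ N(v)} 1 / d̂_k`
where `C = σ_node² σ_weight² F F'` and `d̂_w = deg w + 1`. -/
theorem gcn_expected_inner_product
    {V : Type*} [Fintype V] [DecidableEq V]
    (G : SimpleGraph V) [DecidableRel G.Adj]
    (u v : V) (huv : u ≠ v) (hadj : ¬ G.Adj u v)
    {Ω : Type*} [MeasureSpace Ω] [IsProbabilityMeasure (ℙ : Measure Ω)]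
    (F F' : ℕ)
    (X : V → Fin F → Ω → ℝ) (W : Fin F' → Fin F → Ω → ℝ)
    (σnode σweight : ℝ)
    (hXmeas : ∀ k i, Measurable (X k i))
    (hWmeas : ∀ j i, Measurable (W j i))
    -- the entries of `X` are jointly independent
    (hXindep : iIndepFun
      (fun (p : V × Fin F) ω => X p.1 p.2 ω) ℙ)
    -- the entries of `W` are jointly independent
    (hWindep : iIndepFun
      (fun (p : Fin F' × Fin F) ω => W p.1 p.2 ω) ℙ)
    -- `W` is independent of `X`
    (hXW : IndepFun (fun ω (p : V × Fin F) => X p.1 p.2 ω)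
                    (fun ω (p : Fin F' × Fin F) => W p.1 p.2 ω) ℙ)
    -- mean zero, variance `σ_node²` entries of `X`
    (hXmean : ∀ k i, ∫ ω, X k i ω = 0)
    (hXvar : ∀ k i, ∫ ω, (X k i ω) ^ 2 = σnode ^ 2)
    -- mean zero, variance `σ_weight²` entries of `W`
    (hWmean : ∀ j i, ∫ ω, W j i ω = 0)
    (hWvar : ∀ j i, ∫ ω, (W j i ω) ^ 2 = σweight ^ 2)
    -- `d̂_w = d_w + 1`
    (dhat : V → ℝ) (hdhat : ∀ w, dhat w = G.degree w + 1)
    -- the 1-layer GCN output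
    (h : V → Ω → Fin F' → ℝ)
    (hh : ∀ w ω j, h w ω j =
      ∑ i : Fin F, W j i ω *
        (∑ k ∈ insert w (G.neighborFinset w),
          (1 / Real.sqrt (dhat k * dhat w)) * X k i ω)) :
    ∫ ω, ∑ j : Fin F', h u ω j * h v ω j =
      (σnode ^ 2 * σweight ^ 2 * F * F') / Real.sqrt (dhat u * dhat v) *
        ∑ k ∈ G.neighborFinset u ∩ G.neighborFinset v, 1 / dhat k := by
  have hdpos : ∀ w, 0 < dhat w := fun w => by rw [hdhat]; positivity
  simp only [hh, sum_insert_neighborFinset_eq_sum_normAdj]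
  rw [integral_sum_mul_sum_eq_mul_dotProduct hXmeas hWmeas hXindep hWindep hXW hXmean hXvar
    hWmean hWvar, normAdj_dotProduct_normAdj G dhat huv hadj hdpos, Fintype.card_fin,
    Fintype.card_fin]
  ring
end

section
/- Let G = (V,E) be a finite simple undirected graph and F ∈ ℕ₊. On a probability space, let X : V → ℝ^F be a random matrix whose entries X_{k,i} are jointly independent and identically distributed as a real random variable x with mean 0, variance 1/F, and finite fourth moment. For each vertex w define h_w = Σ_{k ∈ N(w)} X_k. Then for every pair of vertices (u, v) ∈ V × V, Var(h_u · h_v) = (1/F)(d_u d_v + CN(u,v)² − 2·CN(u,v)) + F · Var(x²) · CN(u,v). -/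
/-!
Index the entries of `X` by `p = (k, i) ∈ V × Fin F`. Then `h_u · h_v = ∑_{p,q} M_{pq} X_p X_q`
with `M_{(a,i),(b,j)} = [i = j ∧ a ∈ N(u) ∧ b ∈ N(v)]`, a quadratic form in independent centred
variables. In `E[X_p X_q X_r X_s]` an index occurring only once kills the expectation, so only the
pairings `p = q, r = s`, `p = r, q = s`, `p = s, q = r` survive, each contributing `σ⁴`, with the
fully diagonal term corrected to `μ₄`. Hence
`Var = σ⁴ ∑ M_{pq} (M_{pq} + M_{qp}) + (μ₄ - 3σ⁴) ∑ M_{pp}²`, and counting the entries of `M`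
(`F d_u d_v`, `F CN²`, `F CN`) with `σ² = 1/F` and `μ₄ - σ⁴ = Var(x²)` gives the formula.
-/

open MeasureTheory ProbabilityTheory

instance ENNReal.HolderTriple.instFourFourTwo : ENNReal.HolderTriple 4 4 2 where
  inv_add_inv_eq_inv := by
    rw [← two_mul, show (4 : ENNReal) = 2 * 2 by norm_num, ENNReal.mul_inv (by simp) (by simp),
      ← mul_assoc, ENNReal.mul_inv_cancel (by simp) (by simp), one_mul]

namespace ProbabilityTheory

variable {Ω ι : Type*} {m : MeasurableSpace Ω} {μ : Measure Ω}

lemma memLp_two_mul_of_memLp_four {f g : Ω → ℝ} (hf : MemLp f 4 μ) (hg : MemLp g 4 μ) :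
    MemLp (fun ω => f ω * g ω) 2 μ :=
  hg.mul' hf

lemma integrable_mul_mul_of_memLp_four {f g h k : Ω → ℝ} (hf : MemLp f 4 μ) (hg : MemLp g 4 μ)
    (hh : MemLp h 4 μ) (hk : MemLp k 4 μ) :
    Integrable (fun ω => f ω * g ω * (h ω * k ω)) μ :=
  (memLp_two_mul_of_memLp_four hf hg).integrable_mul (memLp_two_mul_of_memLp_four hh hk)

variable {Y : ι → Ω → ℝ}

lemma integral_mul_mul_mul_mul_eq_zero_of_ne (hmeas : ∀ p, Measurable (Y p))
    (hindep : iIndepFun Y μ) (hmean : ∀ p, ∫ ω, Y p ω ∂μ = 0) {a b c d : ι}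
    (hab : a ≠ b) (hac : a ≠ c) (had : a ≠ d) :
    ∫ ω, Y a ω * (Y b ω * Y c ω * Y d ω) ∂μ = 0 := by
  classical
  have hdisj : Disjoint ({a} : Finset ι) {b, c, d} := by simp [hab, hac, had]
  have hind := (hindep.indepFun_finset _ _ hdisj hmeas).comp (_mγ := Real.measurableSpace)
    (φ := fun v : ({a} : Finset ι) → ℝ => v ⟨a, by simp⟩)
    (ψ := fun v : ({b, c, d} : Finset ι) → ℝ => v ⟨b, by simp⟩ * v ⟨c, by simp⟩ * v ⟨d, by simp⟩)
    (by fun_prop) (by fun_prop)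
  have h := hind.integral_mul_eq_mul_integral (by fun_prop) (by fun_prop)
  simpa [Function.comp_def, hmean] using h

lemma integral_mul_eq_ite [DecidableEq ι] (hmeas : ∀ p, Measurable (Y p))
    (hindep : iIndepFun Y μ) (hmean : ∀ p, ∫ ω, Y p ω ∂μ = 0) {σ2 : ℝ}
    (h2 : ∀ p, ∫ ω, Y p ω ^ 2 ∂μ = σ2) (p q : ι) :
    ∫ ω, Y p ω * Y q ω ∂μ = if p = q then σ2 else 0 := by
  rcases eq_or_ne p q with rfl | hpq
  · simpa [sq] using h2 p
  · simpa [hpq, hmean] using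
      (hindep.indepFun hpq).integral_mul_eq_mul_integral (hmeas p).aestronglyMeasurable
        (hmeas q).aestronglyMeasurable

lemma integral_mul_self_mul_mul [DecidableEq ι] (hmeas : ∀ p, Measurable (Y p))
    (hindep : iIndepFun Y μ) (hmean : ∀ p, ∫ ω, Y p ω ∂μ = 0) {σ2 μ4 : ℝ}
    (h2 : ∀ p, ∫ ω, Y p ω ^ 2 ∂μ = σ2) (h4 : ∀ p, ∫ ω, Y p ω ^ 4 ∂μ = μ4) (p r s : ι) :
    ∫ ω, Y p ω * Y p ω * (Y r ω * Y s ω) ∂μ =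
      if r = s then (if p = r then μ4 else σ2 ^ 2) else 0 := by
  rcases eq_or_ne r s with rfl | hrs
  · rcases eq_or_ne p r with rfl | hpr
    · simp only [if_true, ← h4 p]
      congr 1; ext ω; ring
    · have hind :=
        (hindep.indepFun hpr).comp (measurable_id.pow_const 2) (measurable_id.pow_const 2)
      have := hind.integral_mul_eq_mul_integral (by fun_prop) (by fun_prop)
      simpa [hpr, Function.comp_def, ← pow_two, h2] using this
  · rcases eq_or_ne r p with rfl | hrp
    · calc ∫ ω, Y r ω * Y r ω * (Y r ω * Y s ω) ∂μ
          = ∫ ω, Y s ω * (Y r ω * Y r ω * Y r ω) ∂μ := by congr 1; ext ω; ring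
        _ = _ := by
          rw [integral_mul_mul_mul_mul_eq_zero_of_ne hmeas hindep hmean hrs.symm hrs.symm hrs.symm]
          simp [hrs]
    · calc ∫ ω, Y p ω * Y p ω * (Y r ω * Y s ω) ∂μ
          = ∫ ω, Y r ω * (Y p ω * Y p ω * Y s ω) ∂μ := by congr 1; ext ω; ring
        _ = _ := by
          rw [integral_mul_mul_mul_mul_eq_zero_of_ne hmeas hindep hmean hrp hrp hrs]
          simp [hrs]

lemma integral_mul_mul_mul_mul [DecidableEq ι] (hmeas : ∀ p, Measurable (Y p))
    (hindep : iIndepFun Y μ) (hmean : ∀ p, ∫ ω, Y p ω ∂μ = 0) {σ2 μ4 : ℝ}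
    (h2 : ∀ p, ∫ ω, Y p ω ^ 2 ∂μ = σ2) (h4 : ∀ p, ∫ ω, Y p ω ^ 4 ∂μ = μ4) (p q r s : ι) :
    ∫ ω, Y p ω * Y q ω * (Y r ω * Y s ω) ∂μ =
      σ2 ^ 2 * ((if p = q then 1 else 0) * (if r = s then 1 else 0)
        + (if p = r then 1 else 0) * (if q = s then 1 else 0)
        + (if p = s then 1 else 0) * (if q = r then 1 else 0))
      + (μ4 - 3 * σ2 ^ 2) *
        ((if p = q then 1 else 0) * (if p = r then 1 else 0) * (if p = s then 1 else 0)) := by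
  have hsq := integral_mul_self_mul_mul hmeas hindep hmean h2 h4
  by_cases hpq : p = q
  · subst hpq
    rw [hsq]
    split_ifs <;> simp_all
    ring
  by_cases hpr : p = r
  · subst hpr
    calc ∫ ω, Y p ω * Y q ω * (Y p ω * Y s ω) ∂μ
        = ∫ ω, Y p ω * Y p ω * (Y q ω * Y s ω) ∂μ := by congr 1; ext ω; ring
      _ = _ := by rw [hsq]; split_ifs <;> simp_all
  by_cases hps : p = s
  · subst hps
    calc ∫ ω, Y p ω * Y q ω * (Y r ω * Y p ω) ∂μ
        = ∫ ω, Y p ω * Y p ω * (Y q ω * Y r ω) ∂μ := by congr 1; ext ω; ring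
      _ = _ := by rw [hsq]; split_ifs <;> simp_all
  calc ∫ ω, Y p ω * Y q ω * (Y r ω * Y s ω) ∂μ
      = ∫ ω, Y p ω * (Y q ω * Y r ω * Y s ω) ∂μ := by congr 1; ext ω; ring
    _ = _ := by
      rw [integral_mul_mul_mul_mul_eq_zero_of_ne hmeas hindep hmean hpq hpr hps]
      simp [hpq, hpr, hps]

variable [Fintype ι]

lemma integral_quadForm (hmeas : ∀ p, Measurable (Y p))
    (hindep : iIndepFun Y μ) (hmean : ∀ p, ∫ ω, Y p ω ∂μ = 0) (hL4 : ∀ p, MemLp (Y p) 4 μ)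
    {σ2 : ℝ} (h2 : ∀ p, ∫ ω, Y p ω ^ 2 ∂μ = σ2) (M : ι → ι → ℝ) :
    ∫ ω, ∑ p, ∑ q, M p q * (Y p ω * Y q ω) ∂μ = σ2 * ∑ p, M p p := by
  classical
  have := hindep.isProbabilityMeasure
  have hint (p q : ι) : Integrable (fun ω => Y p ω * Y q ω) μ :=
    (memLp_two_mul_of_memLp_four (hL4 p) (hL4 q)).integrable one_le_two
  rw [integral_finsetSum _ fun p _ => integrable_finsetSum _ fun q _ => (hint p q).const_mul _]
  simp_rw [integral_finsetSum _ fun q _ => (hint _ q).const_mul _, integral_const_mul,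
    integral_mul_eq_ite hmeas hindep hmean h2, Finset.mul_sum]
  simp [mul_comm]

lemma integral_quadForm_sq (hmeas : ∀ p, Measurable (Y p))
    (hindep : iIndepFun Y μ) (hmean : ∀ p, ∫ ω, Y p ω ∂μ = 0) (hL4 : ∀ p, MemLp (Y p) 4 μ)
    {σ2 μ4 : ℝ} (h2 : ∀ p, ∫ ω, Y p ω ^ 2 ∂μ = σ2) (h4 : ∀ p, ∫ ω, Y p ω ^ 4 ∂μ = μ4)
    (M : ι → ι → ℝ) :
    ∫ ω, (∑ p, ∑ q, M p q * (Y p ω * Y q ω)) ^ 2 ∂μ =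
      σ2 ^ 2 * ((∑ p, M p p) ^ 2 + ∑ p, ∑ q, M p q * (M p q + M q p))
        + (μ4 - 3 * σ2 ^ 2) * ∑ p, M p p ^ 2 := by
  classical
  have hexpand : ∀ ω, (∑ p, ∑ q, M p q * (Y p ω * Y q ω)) ^ 2 =
      ∑ p, ∑ q, ∑ r, ∑ s, M p q * M r s * (Y p ω * Y q ω * (Y r ω * Y s ω)) := by
    intro ω
    simp_rw [sq, Finset.sum_mul_sum, mul_mul_mul_comm (M _ _)]
    exact Finset.sum_congr rfl fun p _ => Finset.sum_comm
  have hint (p q r s : ι) :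
      Integrable (fun ω => M p q * M r s * (Y p ω * Y q ω * (Y r ω * Y s ω))) μ :=
    (integrable_mul_mul_of_memLp_four (hL4 p) (hL4 q) (hL4 r) (hL4 s)).const_mul _
  simp_rw [hexpand]
  rw [integral_finsetSum _ fun p _ => integrable_finsetSum _ fun q _ =>
    integrable_finsetSum _ fun r _ => integrable_finsetSum _ fun s _ => hint p q r s]
  simp_rw [integral_finsetSum _ fun _ _ => integrable_finsetSum _ fun _ _ =>
    integrable_finsetSum _ fun _ _ => hint _ _ _ _, integral_finsetSum _ fun _ _ =>
    integrable_finsetSum _ fun _ _ => hint _ _ _ _, integral_finsetSum _ fun _ _ => hint _ _ _ _,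
    integral_const_mul, integral_mul_mul_mul_mul hmeas hindep hmean h2 h4]
  simp only [mul_ite, mul_one, mul_zero, mul_add, Finset.sum_add_distrib, Finset.sum_ite_eq,
    Finset.mem_univ, ↓reduceIte, Finset.sum_ite_irrel, Finset.sum_const_zero, Finset.mul_sum]
  simp only [← Finset.sum_mul, ← Finset.mul_sum, ← pow_two]
  ring

lemma variance_quadForm (hmeas : ∀ p, Measurable (Y p))
    (hindep : iIndepFun Y μ) (hmean : ∀ p, ∫ ω, Y p ω ∂μ = 0) (hL4 : ∀ p, MemLp (Y p) 4 μ)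
    {σ2 μ4 : ℝ} (h2 : ∀ p, ∫ ω, Y p ω ^ 2 ∂μ = σ2) (h4 : ∀ p, ∫ ω, Y p ω ^ 4 ∂μ = μ4)
    (M : ι → ι → ℝ) :
    variance (fun ω => ∑ p, ∑ q, M p q * (Y p ω * Y q ω)) μ =
      σ2 ^ 2 * ∑ p, ∑ q, M p q * (M p q + M q p) + (μ4 - 3 * σ2 ^ 2) * ∑ p, M p p ^ 2 := by
  have := hindep.isProbabilityMeasure
  have hL2 : MemLp (fun ω => ∑ p, ∑ q, M p q * (Y p ω * Y q ω)) 2 μ :=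
    memLp_finsetSum _ fun p _ => memLp_finsetSum _ fun q _ =>
      (memLp_two_mul_of_memLp_four (hL4 p) (hL4 q)).const_mul _
  rw [variance_eq_sub hL2]
  simp only [Pi.pow_apply]
  rw [integral_quadForm_sq hmeas hindep hmean hL4 h2 h4,
    integral_quadForm hmeas hindep hmean hL4 h2]
  ring

end ProbabilityTheory

section PairingMatrix

open Finset

variable {V κ : Type*} [Fintype V] [DecidableEq V] [Fintype κ] [DecidableEq κ]

def pairingMatrix (s t : Finset V) : V × κ → V × κ → ℝ :=
  fun p q => if p.2 = q.2 ∧ p.1 ∈ s ∧ q.1 ∈ t then 1 else 0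

lemma sum_pairingMatrix_mul (s t : Finset V) (y : V × κ → ℝ) :
    ∑ p, ∑ q, pairingMatrix s t p q * (y p * y q) =
      ∑ i, (∑ a ∈ s, y (a, i)) * ∑ b ∈ t, y (b, i) := by
  simp only [pairingMatrix, ite_and, ite_mul, one_mul, zero_mul, Fintype.sum_prod_type, sum_ite_eq,
    mem_univ, ↓reduceIte, sum_ite_irrel, sum_ite_mem, univ_inter, sum_const_zero, sum_mul_sum]
  exact sum_comm

lemma sum_pairingMatrix_diag_sq (s t : Finset V) :
    ∑ p, pairingMatrix (κ := κ) s t p p ^ 2 = Fintype.card κ * #(s ∩ t) := by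
  simp [pairingMatrix, Fintype.sum_prod_type, ite_and, sum_ite_mem, apply_ite Finset.card, mul_comm]

lemma sum_pairingMatrix_mul_add_transpose (s t : Finset V) :
    ∑ p, ∑ q, pairingMatrix (κ := κ) s t p q * (pairingMatrix s t p q + pairingMatrix s t q p) =
      Fintype.card κ * (#s * #t + #(s ∩ t) ^ 2) := by
  simp only [pairingMatrix, Fintype.sum_prod_type, mul_add, sum_add_distrib, mul_ite, mul_one,
    mul_zero]
  simp [ite_and, sum_ite_mem, inter_comm t s, sq, mul_comm, mul_left_comm, mul_assoc]

end PairingMatrix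

theorem message_passing_variance_inner_product_general
    {V : Type*} [Fintype V] [DecidableEq V]
    (G : SimpleGraph V) [DecidableRel G.Adj]
    {Ω : Type*} [MeasureSpace Ω] [IsProbabilityMeasure (ℙ : Measure Ω)]
    (F : ℕ) (hF : 0 < F)
    (X : V → Fin F → Ω → ℝ) (x : Ω → ℝ)
    (hXmeas : ∀ k i, Measurable (X k i))
    -- the entries of `X` are jointly independent
    (hXindep : iIndepFun
      (fun (p : V × Fin F) ω => X p.1 p.2 ω) ℙ)
    -- each entry is distributed as `x`
    (hXid : ∀ k i, IdentDistrib (X k i) x ℙ ℙ)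
    -- `x` has mean `0`, variance `1/F` and finite fourth moment
    (hxmean : ∫ ω, x ω = 0)
    (hxvar : ∫ ω, (x ω) ^ 2 = 1 / F)
    (hxL4 : MemLp x 4 ℙ)
    -- `h_w = ∑_{k ∈ N(w)} X_k`
    (h : V → Ω → Fin F → ℝ)
    (hh : ∀ w ω i, h w ω i = ∑ k ∈ G.neighborFinset w, X k i ω)
    (u v : V) :
    variance (fun ω => ∑ i : Fin F, h u ω i * h v ω i) ℙ =
      (1 / F) * ((G.degree u : ℝ) * (G.degree v : ℝ)
          + ((G.neighborFinset u ∩ G.neighborFinset v).card : ℝ) ^ 2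
          - 2 * ((G.neighborFinset u ∩ G.neighborFinset v).card : ℝ))
        + (F : ℝ) * variance (fun ω => (x ω) ^ 2) ℙ *
            ((G.neighborFinset u ∩ G.neighborFinset v).card : ℝ) := by
  set Y : V × Fin F → Ω → ℝ := fun p ω => X p.1 p.2 ω
  have hmoment (p : V × Fin F) (n : ℕ) : ∫ ω, Y p ω ^ n = ∫ ω, x ω ^ n :=
    ((hXid p.1 p.2).comp (measurable_id.pow_const n)).integral_eq
  have hstat : (fun ω => ∑ i, h u ω i * h v ω i) = fun ω =>
      ∑ p, ∑ q, pairingMatrix (G.neighborFinset u) (G.neighborFinset v) p q * (Y p ω * Y q ω) := by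
    ext ω
    simp only [hh]
    exact (sum_pairingMatrix_mul _ _ fun p => Y p ω).symm
  have hvar_sq : variance (fun ω => x ω ^ 2) ℙ = (∫ ω, x ω ^ 4) - (1 / F) ^ 2 := by
    rw [variance_eq_sub (by simpa only [sq] using memLp_two_mul_of_memLp_four hxL4 hxL4), ← hxvar]
    norm_num [← pow_mul]
  rw [hstat, variance_quadForm (fun p => hXmeas p.1 p.2) hXindep
      (fun p => by simpa [hxmean] using hmoment p 1) (fun p => (hXid p.1 p.2).symm.memLp_snd hxL4)
      (fun p => (hmoment p 2).trans hxvar) (fun p => hmoment p 4),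
    sum_pairingMatrix_mul_add_transpose, sum_pairingMatrix_diag_sq, hvar_sq,
    ← G.card_neighborFinset_eq_degree, ← G.card_neighborFinset_eq_degree, Fintype.card_fin]
  generalize ∫ ω, x ω ^ 4 = μ4
  have hF' : (F : ℝ) ≠ 0 := by positivity
  field_simp
  ring

/-- unbiased common-neighbor estimator, variance.  If the entries of the
random vectors `X_k ∈ ℝ^F` are i.i.d. as a random variable `x` with mean `0`, variance `1/F`
and finite fourth moment, and `h_w = ∑_{k ∈ N(w)} X_k`, then for every pair of vertices
`(u, v)`,
`Var(h_u ⬝ h_v) = (1/F)(d_u d_v + CN(u,v)² − 2 CN(u,v)) + F · Var(x²) · CN(u,v)`. -/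
theorem message_passing_variance_inner_product
    {V : Type*} [Fintype V] [DecidableEq V]
    (G : SimpleGraph V) [DecidableRel G.Adj]
    {Ω : Type*} [MeasureSpace Ω] [IsProbabilityMeasure (ℙ : Measure Ω)]
    (F : ℕ) (hF : 0 < F)
    (X : V → Fin F → Ω → ℝ) (x : Ω → ℝ)
    (hXmeas : ∀ k i, Measurable (X k i)) (hxmeas : Measurable x)
    -- the entries of `X` are jointly independent
    (hXindep : iIndepFun
      (fun (p : V × Fin F) ω => X p.1 p.2 ω) ℙ)
    -- each entry is distributed as `x`
    (hXid : ∀ k i, IdentDistrib (X k i) x ℙ ℙ)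
    -- `x` has mean `0`, variance `1/F` and finite fourth moment
    (hxmean : ∫ ω, x ω = 0)
    (hxvar : ∫ ω, (x ω) ^ 2 = 1 / F)
    (hxL4 : MemLp x 4 ℙ)
    -- `h_w = ∑_{k ∈ N(w)} X_k`
    (h : V → Ω → Fin F → ℝ)
    (hh : ∀ w ω i, h w ω i = ∑ k ∈ G.neighborFinset w, X k i ω)
    (u v : V) :
    variance (fun ω => ∑ i : Fin F, h u ω i * h v ω i) ℙ =
      (1 / F) * ((G.degree u : ℝ) * (G.degree v : ℝ)
          + ((G.neighborFinset u ∩ G.neighborFinset v).card : ℝ) ^ 2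
          - 2 * ((G.neighborFinset u ∩ G.neighborFinset v).card : ℝ))
        + (F : ℝ) * variance (fun ω => (x ω) ^ 2) ℙ *
            ((G.neighborFinset u ∩ G.neighborFinset v).card : ℝ) :=
  message_passing_variance_inner_product_general G F hF X x hXmeas hXindep hXid hxmean hxvar hxL4 h
    hh u v
end

section
/- Let G = (V,E) be a finite simple undirected graph and F ∈ ℕ₊. On a probability space, let X : V → ℝ^F be a random matrix whose entries X_{k,i} are jointly independent and identically distributed with mean 0 and variance 1/F. Define recursively h_v^{(0)} = X_v and h_v^{(l+1)} = Σ_{u ∈ N(v)} h_u^{(l)}. Then for all vertices u, v and all p, q ∈ ℕ, E[h_u^{(p)} · h_v^{(q)}] = Σ_{k ∈ V} |walks^{(p)}(k,u)| · |walks^{(q)}(k,v)|, where |walks^{(l)}(a,b)| denotes the number of walks of length l in G from a to b. -/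
/-!
Unrolling the recursion, `h⁽ˡ⁾_w = ∑ₖ |walks⁽ˡ⁾(k,w)| • X_k`, the walk counts being the entries
of the powers of the adjacency matrix. Independent centred entries are orthogonal in `L²`, so
each feature coordinate contributes `∑ₖ |walks⁽ᵖ⁾(k,u)| |walks⁽q⁾(k,v)| / F`, and there are `F`
coordinates.
-/

open MeasureTheory ProbabilityTheory Finset

namespace SimpleGraph

variable {V : Type*} [Fintype V] [DecidableEq V] (G : SimpleGraph V) [DecidableRel G.Adj]

theorem eq_sum_card_finsetWalkLength_smul {M : Type*} [AddCommMonoid M] (f : ℕ → V → M)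
    (hf : ∀ l w, f (l + 1) w = ∑ u ∈ G.neighborFinset w, f l u) (l : ℕ) (w : V) :
    f l w = ∑ k, #(G.finsetWalkLength l k w) • f 0 k := by
  have hcard : ∀ n k w, #(G.finsetWalkLength n k w) = (G.adjMatrix ℕ ^ n) k w := fun n k w ↦ by
    rw [adjMatrix_pow_apply_eq_card_walk, card_set_walk_length_eq, Nat.cast_id]
  simp_rw [hcard]
  induction l generalizing w with
  | zero => simp [Matrix.one_apply]
  | succ l ih =>
    simp_rw [hf, ih, Finset.sum_comm (s := G.neighborFinset w), ← Finset.sum_smul, pow_succ,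
      mul_adjMatrix_apply]

end SimpleGraph

section

variable {Ω ι : Type*} [MeasurableSpace Ω] {μ : Measure Ω} [Fintype ι] {Y : ι → Ω → ℝ}

lemma integrable_sum_mul_sum (hY : ∀ k, MemLp (Y k) 2 μ) (a b : ι → ℝ) :
    Integrable (fun ω ↦ (∑ k, a k * Y k ω) * (∑ k, b k * Y k ω)) μ :=
  (memLp_finsetSum _ fun k _ ↦ (hY k).const_mul (a k)).integrable_mul
    (memLp_finsetSum _ fun k _ ↦ (hY k).const_mul (b k))

lemma integral_sum_mul_sum_of_pairwise_indepFun [IsProbabilityMeasure μ]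
    (hY : ∀ k, MemLp (Y k) 2 μ) (hindep : Pairwise fun k k' ↦ Y k ⟂ᵢ[μ] Y k')
    (hmean : ∀ k, μ[Y k] = 0) (a b : ι → ℝ) :
    ∫ ω, (∑ k, a k * Y k ω) * (∑ k, b k * Y k ω) ∂μ = ∑ k, a k * b k * ∫ ω, Y k ω ^ 2 ∂μ := by
  have hint : ∀ k k', Integrable (fun ω ↦ a k * b k' * (Y k ω * Y k' ω)) μ :=
    fun k k' ↦ ((hY k).integrable_mul (hY k')).const_mul _
  have horth : ∀ k k', k ≠ k' → ∫ ω, Y k ω * Y k' ω ∂μ = 0 := fun k k' hkk' ↦ by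
    simpa [hmean] using (hindep hkk').integral_fun_mul_eq_mul_integral
      (hY k).aestronglyMeasurable (hY k').aestronglyMeasurable
  calc ∫ ω, (∑ k, a k * Y k ω) * (∑ k, b k * Y k ω) ∂μ
      = ∫ ω, ∑ k, ∑ k', a k * b k' * (Y k ω * Y k' ω) ∂μ := by
        simp_rw [Finset.sum_mul_sum, mul_mul_mul_comm]
    _ = ∑ k, ∑ k', a k * b k' * ∫ ω, Y k ω * Y k' ω ∂μ := by
        rw [integral_finsetSum _ fun k _ ↦ integrable_finsetSum _ fun k' _ ↦ hint k k']
        simp_rw [integral_finsetSum _ fun k' _ ↦ hint _ k', integral_const_mul]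
    _ = ∑ k, a k * b k * ∫ ω, Y k ω ^ 2 ∂μ := by
        refine Finset.sum_congr rfl fun k _ ↦ ?_
        rw [Finset.sum_eq_single k (fun k' _ hk' ↦ by rw [horth k k' hk'.symm, mul_zero])
          (by simp)]
        simp_rw [sq]

end

theorem multilayer_message_passing_expected_inner_product_eq_walk_counts_general
    {V : Type*} [Fintype V] [DecidableEq V]
    (G : SimpleGraph V) [DecidableRel G.Adj]
    {Ω : Type*} [MeasureSpace Ω] [IsProbabilityMeasure (ℙ : Measure Ω)]
    (F : ℕ) (hF : 0 < F)
    (X : V → Fin F → Ω → ℝ)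
    (hXmeas : ∀ k i, Measurable (X k i))
    -- the entries of `X` are jointly independent
    (hXindep : iIndepFun
      (fun (p : V × Fin F) ω => X p.1 p.2 ω) ℙ)
    -- with mean `0` and variance `1/F`
    (hXmean : ∀ k i, ∫ ω, X k i ω = 0)
    (hXvar : ∀ k i, ∫ ω, (X k i ω) ^ 2 = 1 / F)
    -- the recursively defined multi-layer message passing
    (h : ℕ → V → Ω → Fin F → ℝ)
    (hh0 : ∀ w ω i, h 0 w ω i = X w i ω)
    (hhsucc : ∀ l w ω i, h (l + 1) w ω i = ∑ k ∈ G.neighborFinset w, h l k ω i)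
    (u v : V) (p q : ℕ) :
    ∫ ω, ∑ i : Fin F, h p u ω i * h q v ω i =
      ∑ k : V, ((G.finsetWalkLength p k u).card : ℝ) *
        ((G.finsetWalkLength q k v).card : ℝ) := by
  have hX2 : ∀ k i, MemLp (X k i) 2 := fun k i ↦
    (memLp_two_iff_integrable_sq (hXmeas k i).aestronglyMeasurable).2
      (.of_integral_ne_zero (by rw [hXvar]; positivity))
  have hindep : ∀ i, Pairwise fun k k' ↦ X k i ⟂ᵢ X k' i :=
    fun i k k' hkk' ↦ hXindep.indepFun (i := (k, i)) (j := (k', i)) (by simpa using hkk')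
  have hlin : ∀ l w ω i, h l w ω i = ∑ k, #(G.finsetWalkLength l k w) * X k i ω := by
    have hsucc : ∀ l w, h (l + 1) w = ∑ k ∈ G.neighborFinset w, h l k := fun l w ↦ by
      ext ω i; rw [hhsucc, Finset.sum_apply, Finset.sum_apply]
    intro l w ω i
    rw [G.eq_sum_card_finsetWalkLength_smul h hsucc l w]
    simp_rw [Finset.sum_apply, Pi.smul_apply, hh0, nsmul_eq_mul]
  calc ∫ ω, ∑ i, h p u ω i * h q v ω i
      = ∑ i, ∫ ω, (∑ k, (#(G.finsetWalkLength p k u) : ℝ) * X k i ω) *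
          (∑ k, (#(G.finsetWalkLength q k v) : ℝ) * X k i ω) := by
        simp_rw [hlin]
        exact integral_finsetSum _ fun i _ ↦ integrable_sum_mul_sum (hX2 · i) _ _
    _ = ∑ _ : Fin F, ∑ k, (#(G.finsetWalkLength p k u) : ℝ) *
          #(G.finsetWalkLength q k v) * (1 / F) := by
        refine Finset.sum_congr rfl fun i _ ↦ ?_
        simp_rw [integral_sum_mul_sum_of_pairwise_indepFun (hX2 · i) (hindep i) (hXmean · i),
          hXvar]
    _ = _ := by
        rw [Finset.sum_const, Finset.card_univ, Fintype.card_fin, nsmul_eq_mul,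
          ← Finset.sum_mul, mul_one_div, ← mul_div_assoc, mul_div_cancel_left₀ _ (by positivity)]

/-- multi-layer message passing counts walks.  With i.i.d. mean-`0`,
variance-`1/F` entries, `h_v⁽⁰⁾ = X_v` and `h_v⁽ˡ⁺¹⁾ = ∑_{u ∈ N(v)} h_u⁽ˡ⁾`, for all vertices
`u, v` and all `p, q ∈ ℕ`,
`E[h_u⁽ᵖ⁾ ⬝ h_v⁽𐞥⁾] = ∑_{k ∈ V} |walks⁽ᵖ⁾(k,u)| · |walks⁽𐞥⁾(k,v)|`. -/
theorem multilayer_message_passing_expected_inner_product_eq_walk_counts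
    {V : Type*} [Fintype V] [DecidableEq V]
    (G : SimpleGraph V) [DecidableRel G.Adj]
    {Ω : Type*} [MeasureSpace Ω] [IsProbabilityMeasure (ℙ : Measure Ω)]
    (F : ℕ) (hF : 0 < F)
    (X : V → Fin F → Ω → ℝ)
    (hXmeas : ∀ k i, Measurable (X k i))
    -- the entries of `X` are jointly independent
    (hXindep : iIndepFun
      (fun (p : V × Fin F) ω => X p.1 p.2 ω) ℙ)
    -- and identically distributed
    (hXid : ∀ (p q : V × Fin F), IdentDistrib (X p.1 p.2) (X q.1 q.2) ℙ ℙ)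
    -- with mean `0` and variance `1/F`
    (hXmean : ∀ k i, ∫ ω, X k i ω = 0)
    (hXvar : ∀ k i, ∫ ω, (X k i ω) ^ 2 = 1 / F)
    -- the recursively defined multi-layer message passing
    (h : ℕ → V → Ω → Fin F → ℝ)
    (hh0 : ∀ w ω i, h 0 w ω i = X w i ω)
    (hhsucc : ∀ l w ω i, h (l + 1) w ω i = ∑ k ∈ G.neighborFinset w, h l k ω i)
    (u v : V) (p q : ℕ) :
    ∫ ω, ∑ i : Fin F, h p u ω i * h q v ω i =
      ∑ k : V, ((G.finsetWalkLength p k u).card : ℝ) *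
        ((G.finsetWalkLength q k v).card : ℝ) :=
  multilayer_message_passing_expected_inner_product_eq_walk_counts_general G F hF X hXmeas hXindep
    hXmean hXvar h hh0 hhsucc u v p q
end

section
/- Let G = (V,E) be a finite simple undirected graph and F ∈ ℕ₊. On a probability space, let X : V → ℝ^F be a random matrix whose entries X_{k,i} are jointly independent and uniformly distributed on the two-point set {−1/√F, +1/√F}. For each vertex w define h_w = Σ_{k ∈ N(w)} X_k. Then for every pair of vertices (u, v) ∈ V × V, Var(h_u · h_v) = (1/F)(d_u d_v + CN(u,v)² − 2·CN(u,v)). -/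
/-!
Every entry has square `1/F`. Splitting off the diagonal terms `k = l`, which contribute a
constant, `h_u · h_v` is a constant plus `Z = ∑_i ∑_{(k,l)} X_{k,i} X_{l,i}`, the inner sum
running over `(k, l) ∈ N(u) × N(v)` with `k ≠ l`. For entries `a ≠ b` and `c ≠ d`, independence
and centring give `E[X_a X_b X_c X_d] = 1/F²` if `{a, b} = {c, d}` and `0` otherwise, since then
some entry occurs exactly once. Hence `Var Z` is `1/F²` times the number of pairs of terms of `Z`
with the same unordered pair of entries: for each of the `F` columns, `(k, l)` matches itself and,
when `k, l ∈ N(u) ∩ N(v)`, also `(l, k)`, which gives `F ((d_u d_v - CN) + (CN² - CN))`.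
-/

open MeasureTheory ProbabilityTheory Finset

section RealValued

variable {Ω : Type*} [MeasurableSpace Ω] {μ : Measure Ω} [IsProbabilityMeasure μ]

lemma integral_eq_zero_of_forall_eq_or_eq_neg {f : Ω → ℝ} {c : ℝ} (hf : Measurable f)
    (hval : ∀ ω, f ω = c ∨ f ω = -c) (hunif : μ {ω | f ω = c} = 1 / 2) :
    ∫ ω, f ω ∂μ = 0 := by
  set A := {ω | f ω = c}
  have hA : MeasurableSet A := hf (measurableSet_singleton c)
  have hAreal : μ.real A = 1 / 2 := by simp [measureReal_def, hunif]
  have hfA : Set.EqOn f (fun _ ↦ c) A := fun ω hω ↦ hω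
  have hfAc : Set.EqOn f (fun _ ↦ -c) Aᶜ := fun ω hω ↦ (hval ω).resolve_left hω
  have hint : Integrable f μ :=
    .of_bound hf.aestronglyMeasurable |c| <| ae_of_all _ fun ω ↦ by
      rcases hval ω with h | h <;> simp [h]
  rw [← integral_add_compl hA hint, setIntegral_congr_fun hA hfA,
    setIntegral_congr_fun hA.compl hfAc, setIntegral_const, setIntegral_const,
    probReal_compl_eq_one_sub hA, hAreal]
  simp only [smul_eq_mul]
  ring

lemma integrable_of_sq_eq {f : Ω → ℝ} {c : ℝ} (hf : Measurable f) (hsq : ∀ ω, f ω ^ 2 = c) :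
    Integrable f μ :=
  .of_bound hf.aestronglyMeasurable √c <| ae_of_all _ fun ω ↦ by
    rw [Real.norm_eq_abs, ← Real.sqrt_sq_eq_abs, hsq]

end RealValued

section IndependentFamily

variable {Ω ι : Type*} [MeasurableSpace Ω] {μ : Measure Ω} {Y : ι → Ω → ℝ}

lemma integral_mul_comp_eq_zero_of_notMem (hindep : iIndepFun Y μ) (hmeas : ∀ p, Measurable (Y p))
    {p : ι} (hmean : ∫ ω, Y p ω ∂μ = 0) {S : Finset ι} (hp : p ∉ S) {g : (S → ℝ) → ℝ}
    (hg : Measurable g) :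
    ∫ ω, Y p ω * g (fun j ↦ Y j ω) ∂μ = 0 := by
  have hrest : Measurable fun ω (j : S) ↦ Y j ω := measurable_pi_lambda _ fun j ↦ hmeas j
  have hind : IndepFun (Y p) (fun ω ↦ g fun j : S ↦ Y j ω) μ :=
    (hindep.indepFun_finset {p} S (disjoint_singleton_left.2 hp) hmeas).comp
      (measurable_pi_apply (⟨p, mem_singleton_self p⟩ : ({p} : Finset ι))) hg
  have := hind.integral_mul_eq_mul_integral (hmeas p).aestronglyMeasurable
    (hg.comp hrest).aestronglyMeasurable
  simpa [hmean] using this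

lemma integral_mul_eq_zero_of_ne (hindep : iIndepFun Y μ) (hmeas : ∀ p, Measurable (Y p))
    {p q : ι} (hmean : ∫ ω, Y p ω ∂μ = 0) (hpq : p ≠ q) :
    ∫ ω, Y p ω * Y q ω ∂μ = 0 :=
  integral_mul_comp_eq_zero_of_notMem hindep hmeas hmean (S := {q}) (by simpa using hpq)
    (g := fun v ↦ v ⟨q, mem_singleton_self q⟩) (measurable_pi_apply _)

lemma integral_mul_mul_mul_mul [IsProbabilityMeasure μ] [DecidableEq ι] (hindep : iIndepFun Y μ)
    (hmeas : ∀ p, Measurable (Y p)) (hmean : ∀ p, ∫ ω, Y p ω ∂μ = 0) {σ : ℝ}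
    (hsq : ∀ p ω, Y p ω ^ 2 = σ) {a b c d : ι} (hab : a ≠ b) (hcd : c ≠ d) :
    ∫ ω, Y a ω * Y b ω * (Y c ω * Y d ω) ∂μ = if s(a, b) = s(c, d) then σ ^ 2 else 0 := by
  split_ifs with h
  · have hconst : ∀ ω, Y a ω * Y b ω * (Y c ω * Y d ω) = σ ^ 2 := by
      intro ω
      rcases Sym2.eq_iff.1 h with ⟨rfl, rfl⟩ | ⟨rfl, rfl⟩ <;>
        linear_combination Y a ω ^ 2 * hsq b ω + σ * hsq a ω
    simp [hconst]
  have hlonely : c ∉ ({a, b} : Finset ι) ∨ d ∉ ({a, b} : Finset ι) := by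
    by_contra! hcontra
    simp only [mem_insert, mem_singleton] at hcontra
    rcases hcontra with ⟨rfl | rfl, rfl | rfl⟩ <;>
      first | exact hcd rfl | exact h rfl | exact h Sym2.eq_swap
  rcases hlonely with hc | hd
  · have := integral_mul_comp_eq_zero_of_notMem hindep hmeas (hmean c) (S := {a, b, d})
      (by simpa [hcd] using hc)
      (g := fun v ↦ v ⟨a, by simp⟩ * v ⟨b, by simp⟩ * v ⟨d, by simp⟩) (by fun_prop)
    simpa [mul_comm, mul_left_comm, mul_assoc] using this
  · have := integral_mul_comp_eq_zero_of_notMem hindep hmeas (hmean d) (S := {a, b, c})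
      (by simpa [hcd.symm] using hd)
      (g := fun v ↦ v ⟨a, by simp⟩ * v ⟨b, by simp⟩ * v ⟨c, by simp⟩) (by fun_prop)
    simpa [mul_comm, mul_left_comm, mul_assoc] using this

lemma variance_sum_mul_of_ne {κ : Type*} [IsProbabilityMeasure μ] [DecidableEq ι]
    (hindep : iIndepFun Y μ) (hmeas : ∀ p, Measurable (Y p)) (hmean : ∀ p, ∫ ω, Y p ω ∂μ = 0) {σ : ℝ}
    (hsq : ∀ p ω, Y p ω ^ 2 = σ) (P : Finset κ) (e : κ → ι × ι)
    (he : ∀ a ∈ P, (e a).1 ≠ (e a).2) :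
    Var[fun ω ↦ ∑ a ∈ P, Y (e a).1 ω * Y (e a).2 ω; μ] =
      ∑ a ∈ P, ∑ b ∈ P, if s((e a).1, (e a).2) = s((e b).1, (e b).2) then σ ^ 2 else 0 := by
  have hquadInt : ∀ a b,
      Integrable (fun ω ↦ Y (e a).1 ω * Y (e a).2 ω * (Y (e b).1 ω * Y (e b).2 ω)) μ :=
    fun a b ↦ integrable_of_sq_eq (c := σ ^ 4) (by fun_prop) fun ω ↦ by
      simp only [mul_pow, hsq]; ring
  have hpairInt : ∀ a, Integrable (fun ω ↦ Y (e a).1 ω * Y (e a).2 ω) μ :=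
    fun a ↦ integrable_of_sq_eq (c := σ ^ 2) (by fun_prop) fun ω ↦ by
      simp only [mul_pow, hsq]; ring
  have hcentred : ∫ ω, ∑ a ∈ P, Y (e a).1 ω * Y (e a).2 ω ∂μ = 0 := by
    rw [integral_finsetSum _ fun a _ ↦ hpairInt a]
    exact sum_eq_zero fun a ha ↦ integral_mul_eq_zero_of_ne hindep hmeas (hmean _) (he a ha)
  rw [variance_of_integral_eq_zero (by fun_prop) hcentred]
  simp_rw [sq, sum_mul_sum]
  rw [integral_finsetSum _ fun a _ ↦ integrable_finsetSum _ fun b _ ↦ hquadInt a b]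
  refine sum_congr rfl fun a ha ↦ ?_
  rw [integral_finsetSum _ fun b _ ↦ hquadInt a b]
  exact sum_congr rfl fun b hb ↦ by
    rw [integral_mul_mul_mul_mul hindep hmeas hmean hsq (he a ha) (he b hb), sq]

end IndependentFamily

section Counting

variable {α : Type*} [DecidableEq α]

lemma filter_product_fst_eq_snd (A B : Finset α) : {e ∈ A ×ˢ B | e.1 = e.2} = (A ∩ B).diag := by
  ext ⟨k, l⟩
  simp only [mem_filter, mem_product, mem_diag, mem_inter]
  grind

lemma card_filter_product_fst_ne_snd_add (A B : Finset α) :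
    #{e ∈ A ×ˢ B | e.1 ≠ e.2} + #(A ∩ B) = #A * #B := by
  rw [← diag_card (A ∩ B), ← filter_product_fst_eq_snd, add_comm, card_filter_add_card_filter_not,
    card_product]

lemma filter_swap_mem_filter_product_fst_ne_snd (A B : Finset α) :
    {e ∈ {e ∈ A ×ˢ B | e.1 ≠ e.2} | e.swap ∈ {e ∈ A ×ˢ B | e.1 ≠ e.2}} = (A ∩ B).offDiag := by
  ext ⟨k, l⟩
  simp only [mem_filter, mem_product, Prod.swap_prod_mk, mem_offDiag, mem_inter]
  tauto

lemma sum_mul_sum_eq_card_inter_mul_add {R : Type*} [CommRing R] {x : α → R} {s : R}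
    (hx : ∀ k, x k ^ 2 = s) (A B : Finset α) :
    (∑ k ∈ A, x k) * (∑ l ∈ B, x l) =
      #(A ∩ B) * s + ∑ e ∈ A ×ˢ B with e.1 ≠ e.2, x e.1 * x e.2 := by
  rw [sum_mul_sum, ← sum_product', ← sum_filter_add_sum_filter_not _ fun e ↦ e.1 = e.2,
    filter_product_fst_eq_snd, sum_congr rfl fun e he ↦ by rw [(mem_diag.1 he).2, ← sq, hx],
    sum_const, diag_card, nsmul_eq_mul]

lemma sum_sum_ite_sym2_eq {R : Type*} [Semiring R] (P : Finset (α × α))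
    (hP : ∀ e ∈ P, e.1 ≠ e.2) (c : R) :
    ∑ e ∈ P, ∑ e' ∈ P, (if s(e.1, e.2) = s(e'.1, e'.2) then c else 0) =
      (#P + #{e ∈ P | e.swap ∈ P}) * c := by
  have hinner : ∀ e ∈ P, ∑ e' ∈ P, (if s(e.1, e.2) = s(e'.1, e'.2) then c else 0) =
      c + if e.swap ∈ P then c else 0 := by
    intro e he
    have hswap : e.swap ≠ e := fun h ↦ hP e he (congrArg Prod.fst h).symm
    have hsplit : ∀ e' : α × α, (if s(e.1, e.2) = s(e'.1, e'.2) then c else 0) =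
        (if e = e' then c else 0) + if e.swap = e' then c else 0 := by
      intro e'
      simp only [Sym2.mk_eq_mk_iff, ← Prod.swap_eq_iff_eq_swap]
      by_cases h1 : e = e' <;> by_cases h2 : e.swap = e' <;> simp_all
    rw [sum_congr rfl fun e' _ ↦ hsplit e', sum_add_distrib, sum_ite_eq, sum_ite_eq, if_pos he]
  rw [sum_congr rfl hinner, sum_add_distrib, sum_const, ← sum_filter, sum_const, nsmul_eq_mul,
    nsmul_eq_mul, add_mul]

lemma sum_sum_ite_sym2_prodMk_eq {β R : Type*} [Fintype β] [DecidableEq β] [Semiring R]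
    (P : Finset (α × α)) (c : R) :
    ∑ a ∈ (univ : Finset β) ×ˢ P, ∑ b ∈ (univ : Finset β) ×ˢ P,
        (if s((a.2.1, a.1), (a.2.2, a.1)) = s((b.2.1, b.1), (b.2.2, b.1)) then c else 0) =
      Fintype.card β * ∑ e ∈ P, ∑ e' ∈ P, (if s(e.1, e.2) = s(e'.1, e'.2) then c else 0) := by
  have hsplit : ∀ (i j : β) (e e' : α × α),
      (if s((e.1, i), (e.2, i)) = s((e'.1, j), (e'.2, j)) then c else 0) =
        if i = j then (if s(e.1, e.2) = s(e'.1, e'.2) then c else 0) else 0 := by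
    intro i j e e'
    by_cases hij : i = j
    · subst hij
      simp only [Sym2.eq_iff, Prod.mk.injEq, and_true, if_true]
    · simp only [Sym2.eq_iff, Prod.mk.injEq, hij, and_false, or_false, if_false]
  simp only [sum_product, hsplit, ← ite_sum_zero, sum_ite_eq, mem_univ, if_true]
  rw [← card_univ, ← nsmul_eq_mul, ← sum_const]

end Counting

theorem hypercube_message_passing_variance_general
    {V : Type*} [Fintype V] [DecidableEq V]
    (G : SimpleGraph V) [DecidableRel G.Adj]
    {Ω : Type*} [MeasureSpace Ω] [IsProbabilityMeasure (ℙ : Measure Ω)]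
    (F : ℕ)
    (X : V → Fin F → Ω → ℝ)
    (hXmeas : ∀ k i, Measurable (X k i))
    -- the entries of `X` are jointly independent
    (hXindep : iIndepFun
      (fun (p : V × Fin F) ω => X p.1 p.2 ω) ℙ)
    -- each entry is uniformly distributed on the two-point set `{−1/√F, +1/√F}`
    (hXvalues : ∀ k i ω, X k i ω = 1 / Real.sqrt F ∨ X k i ω = -(1 / Real.sqrt F))
    (hXunif : ∀ k i, ℙ {ω | X k i ω = 1 / Real.sqrt F} = 1 / 2)
    -- `h_w = ∑_{k ∈ N(w)} X_k`
    (h : V → Ω → Fin F → ℝ)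
    (hh : ∀ w ω i, h w ω i = ∑ k ∈ G.neighborFinset w, X k i ω)
    (u v : V) :
    variance (fun ω => ∑ i : Fin F, h u ω i * h v ω i) ℙ =
      (1 / F) * ((G.degree u : ℝ) * (G.degree v : ℝ)
        + ((G.neighborFinset u ∩ G.neighborFinset v).card : ℝ) ^ 2
        - 2 * ((G.neighborFinset u ∩ G.neighborFinset v).card : ℝ)) := by
  have hsq : ∀ (p : V × Fin F) ω, X p.1 p.2 ω ^ 2 = 1 / F := by
    rintro ⟨k, i⟩ ω
    rcases hXvalues k i ω with hx | hx <;> simp [hx]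
  have hmean : ∀ p : V × Fin F, ∫ ω, X p.1 p.2 ω = 0 := fun p ↦
    integral_eq_zero_of_forall_eq_or_eq_neg (hXmeas _ _) (hXvalues _ _) (hXunif _ _)
  set M := G.neighborFinset u ∩ G.neighborFinset v
  set P := {e ∈ G.neighborFinset u ×ˢ G.neighborFinset v | e.1 ≠ e.2}
  have hsplit : (fun ω ↦ ∑ i, h u ω i * h v ω i) = fun ω ↦
      F * (#M * (1 / F)) + ∑ a ∈ univ ×ˢ P, X a.2.1 a.1 ω * X a.2.2 a.1 ω := by
    funext ω
    simp only [hh, sum_mul_sum_eq_card_inter_mul_add fun k ↦ hsq (k, _) ω]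
    rw [sum_add_distrib, sum_const, card_univ, Fintype.card_fin, nsmul_eq_mul, sum_product]
  have hvar := variance_sum_mul_of_ne hXindep (fun p ↦ hXmeas p.1 p.2) hmean hsq (univ ×ˢ P)
    (fun a ↦ ((a.2.1, a.1), (a.2.2, a.1))) fun a ha ↦ by
      simpa using (mem_filter.1 (mem_product.1 ha).2).2
  dsimp only at hvar
  rw [hsplit, variance_const_add (by fun_prop), hvar, sum_sum_ite_sym2_prodMk_eq,
    sum_sum_ite_sym2_eq P fun e he ↦ (mem_filter.1 he).2,
    filter_swap_mem_filter_product_fst_ne_snd, Fintype.card_fin]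
  have hP : (#P : ℝ) = G.degree u * G.degree v - #M := by
    rw [← G.card_neighborFinset_eq_degree, ← G.card_neighborFinset_eq_degree, eq_sub_iff_add_eq]
    exact_mod_cast card_filter_product_fst_ne_snd_add _ _
  have hoffDiag : (#M.offDiag : ℝ) = #M * #M - #M := by
    rw [offDiag_card, Nat.cast_sub (Nat.le_mul_self _), Nat.cast_mul]
  rw [hP, hoffDiag]
  rcases eq_or_ne (F : ℝ) 0 with hF | hF
  · simp [hF]
  · field_simp
    ring

/-- variance for hypercube-sampled signatures.  If the entries of the
random vectors `X_k ∈ ℝ^F` are jointly independent and uniformly distributed on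
`{−1/√F, +1/√F}`, and `h_w = ∑_{k ∈ N(w)} X_k`, then for every pair of vertices `(u, v)`,
`Var(h_u ⬝ h_v) = (1/F)(d_u d_v + CN(u,v)² − 2 CN(u,v))`. -/
theorem hypercube_message_passing_variance
    {V : Type*} [Fintype V] [DecidableEq V]
    (G : SimpleGraph V) [DecidableRel G.Adj]
    {Ω : Type*} [MeasureSpace Ω] [IsProbabilityMeasure (ℙ : Measure Ω)]
    (F : ℕ) (hF : 0 < F)
    (X : V → Fin F → Ω → ℝ)
    (hXmeas : ∀ k i, Measurable (X k i))
    -- the entries of `X` are jointly independent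
    (hXindep : iIndepFun
      (fun (p : V × Fin F) ω => X p.1 p.2 ω) ℙ)
    -- each entry is uniformly distributed on the two-point set `{−1/√F, +1/√F}`
    (hXvalues : ∀ k i ω, X k i ω = 1 / Real.sqrt F ∨ X k i ω = -(1 / Real.sqrt F))
    (hXunif : ∀ k i, ℙ {ω | X k i ω = 1 / Real.sqrt F} = 1 / 2)
    -- `h_w = ∑_{k ∈ N(w)} X_k`
    (h : V → Ω → Fin F → ℝ)
    (hh : ∀ w ω i, h w ω i = ∑ k ∈ G.neighborFinset w, X k i ω)
    (u v : V) :
    variance (fun ω => ∑ i : Fin F, h u ω i * h v ω i) ℙ =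
      (1 / F) * ((G.degree u : ℝ) * (G.degree v : ℝ)
        + ((G.neighborFinset u ∩ G.neighborFinset v).card : ℝ) ^ 2
        - 2 * ((G.neighborFinset u ∩ G.neighborFinset v).card : ℝ)) :=
  hypercube_message_passing_variance_general G F X hXmeas hXindep hXvalues hXunif h hh u v
end
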